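/- arXiv:1305.6885 — 15 statements merged into one kernel-verified Lean document; each statement's English description precedes it below -/
import Mathlib

section
/- Let G be a Menger algebra of rank n and H a subset of G. Then the relation R_H = {(a, b) ∈ G × G | ρ_H⟨a⟩ = ρ_H⟨b⟩} is a v-congruence on G, i.e., an equivalence relation that is v-regular. -/
/-- Superassociativity of the (n+1)-ary Menger operation. -/
def SuperAssoc {G : Type*} (n : ℕ) (op : G → (Fin n → G) → G) : Prop :=
  ∀ (f : G) (g h : Fin n → G), op (op f g) h = op f (fun i => op (g i) h)

/-- The set `T_n(G)` of elementary translations. -/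
inductive IsTranslation {G : Type*} (n : ℕ) (op : G → (Fin n → G) → G) : (G → G) → Prop
  | id : IsTranslation n op (fun x => x)
  | step (t : G → G) (ht : IsTranslation n op t) (a : G) (i : Fin n) (b : Fin n → G) :
      IsTranslation n op (fun x => op a (Function.update b i (t x)))

/-- `ρ_H⟨a⟩ = {t ∈ T_n(G) | t(a) ∈ H}`. -/
def rhoSet {G : Type*} (n : ℕ) (op : G → (Fin n → G) → G) (H : Set G) (a : G) :
    Set (G → G) :=
  {t | IsTranslation n op t ∧ t a ∈ H}

/-- `ρ°_H⟨t⟩ = {a ∈ G | t(a) ∈ H}`. -/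
def rhoCirc {G : Type*} (n : ℕ) (op : G → (Fin n → G) → G) (H : Set G) (t : G → G) :
    Set G :=
  {a | t a ∈ H}

/-- `W_H = {a ∈ G | ρ_H⟨a⟩ = ∅}`. -/
def WH {G : Type*} (n : ℕ) (op : G → (Fin n → G) → G) (H : Set G) : Set G :=
  {a | rhoSet n op H a = ∅}

/-- `R_H = {(a,b) | ρ_H⟨a⟩ = ρ_H⟨b⟩}`. -/
def RH {G : Type*} (n : ℕ) (op : G → (Fin n → G) → G) (H : Set G) : G → G → Prop :=
  fun a b => rhoSet n op H a = rhoSet n op H b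

/-- A subset `H` is strong. -/
def Strong {G : Type*} (n : ℕ) (op : G → (Fin n → G) → G) (H : Set G) : Prop :=
  ∀ a b : G, (rhoSet n op H a ∩ rhoSet n op H b).Nonempty →
    rhoSet n op H a = rhoSet n op H b

lemma trans_comp {G : Type*} {n : ℕ} {op : G → (Fin n → G) → G} {t : G → G}
    (ht : IsTranslation n op t) (z : G) (c : Fin n → G) (i : Fin n) :
    IsTranslation n op (fun x => t (op z (Function.update c i x))) := by
  induction ht with
  | id => exact IsTranslation.step _ IsTranslation.id z i c
  | step t' ht' a j b ih => exact IsTranslation.step _ ih a j b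

lemma rho_key {G : Type*} {n : ℕ} (op : G → (Fin n → G) → G) (H : Set G)
    (z : G) (c : Fin n → G) (i : Fin n) {u v : G}
    (h : rhoSet n op H u = rhoSet n op H v) :
    rhoSet n op H (op z (Function.update c i u)) =
      rhoSet n op H (op z (Function.update c i v)) := by
  ext t
  simp only [rhoSet, Set.mem_setOf_eq]
  constructor <;> rintro ⟨ht, hmem⟩ <;> refine ⟨ht, ?_⟩
  · have h1 : (fun x => t (op z (Function.update c i x))) ∈ rhoSet n op H u :=
      ⟨trans_comp ht z c i, hmem⟩
    rw [h] at h1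
    exact h1.2
  · have h1 : (fun x => t (op z (Function.update c i x))) ∈ rhoSet n op H v :=
      ⟨trans_comp ht z c i, hmem⟩
    rw [← h] at h1
    exact h1.2

theorem stmt0 {G : Type*} [Nonempty G] {n : ℕ} (hn : 1 ≤ n)
    (op : G → (Fin n → G) → G) (hop : SuperAssoc n op) (H : Set G) :
    Equivalence (RH n op H) ∧
    ∀ (z : G) (x y : Fin n → G),
      (∀ i, RH n op H (x i) (y i)) → RH n op H (op z x) (op z y) := by
  refine ⟨⟨fun _ => rfl, Eq.symm, Eq.trans⟩, fun z x y hxy => ?_⟩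
  have main : ∀ k : ℕ, k ≤ n →
      RH n op H (op z x) (op z (fun i => if i.val < k then y i else x i)) := by
    intro k
    induction k with
    | zero =>
        intro _
        have : (fun i : Fin n => if i.val < 0 then y i else x i) = x := by
          funext i; simp
        rw [this]; exact rfl
    | succ k ih =>
        intro hk
        have hk' : k ≤ n := Nat.le_of_succ_le hk
        have hkn : k < n := hk
        set w : Fin n → G := fun i => if i.val < k then y i else x i with hw
        set j : Fin n := ⟨k, hkn⟩ with hj
        have hwj : w j = x j := by simp [hw, hj]
        have hstep : (fun i : Fin n => if i.val < k + 1 then y i else x i) =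
            Function.update w j (y j) := by
          funext i
          by_cases hij : i = j
          · subst hij; simp [hj]
          · rw [Function.update_of_ne hij, hw]
            have hne : i.val ≠ k := fun hc => hij (Fin.ext hc)
            by_cases hik : i.val < k
            · simp [hik, Nat.lt_succ_of_lt hik]
            · have : ¬ i.val < k + 1 := by omega
              simp [hik, this]
        have hrw : rhoSet n op H (w j) = rhoSet n op H (y j) := by
          rw [hwj]; exact hxy j
        have h2 : rhoSet n op H (op z (Function.update w j (w j))) =
            rhoSet n op H (op z (Function.update w j (y j))) :=
          rho_key op H z w j hrw
        rw [Function.update_eq_self] at h2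
        rw [hstep]
        exact (ih hk').trans h2
  have := main n le_rfl
  have hy : (fun i : Fin n => if i.val < n then y i else x i) = y := by
    funext i; simp [i.isLt]
  rwa [hy] at this
end

section
/- Let G be a Menger algebra of rank n and H a subset of G. If the set W_H = {a ∈ G | ρ_H⟨a⟩ = ∅} is nonempty, then W_H is an l-ideal of G. -/
lemma comp_translation {G : Type*} {n : ℕ} {op : G → (Fin n → G) → G}
    {t s : G → G} (ht : IsTranslation n op t) (hs : IsTranslation n op s) :
    IsTranslation n op (t ∘ s) := by
  induction ht with
  | id => exact hs
  | step t' ht' a i b ih =>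
      exact IsTranslation.step (t' ∘ s) ih a i b

theorem stmt1 {G : Type*} [Nonempty G] {n : ℕ} (hn : 1 ≤ n)
    (op : G → (Fin n → G) → G) (hop : SuperAssoc n op) (H : Set G)
    (hW : (WH n op H).Nonempty) :
    ∀ (x : G) (h : Fin n → G), (∃ i, h i ∈ WH n op H) → op x h ∈ WH n op H := by
  rintro x h ⟨i, hi⟩
  simp only [WH, Set.mem_setOf_eq, Set.eq_empty_iff_forall_notMem] at hi ⊢
  rintro t ⟨ht, htH⟩
  have hs : IsTranslation n op (fun y => op x (Function.update h i y)) :=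
    IsTranslation.step _ IsTranslation.id x i h
  refine hi (t ∘ fun y => op x (Function.update h i y)) ⟨comp_translation ht hs, ?_⟩
  simpa [Function.comp, Function.update_eq_self] using htH
end

section
/- Let G be a Menger algebra of rank n. If a nonempty subset H of G is a normal v-complex, then H is an equivalence class of the relation R_H, and this class is different from W_H. -/
theorem stmt2 {G : Type*} [Nonempty G] {n : ℕ} (hn : 1 ≤ n)
    (op : G → (Fin n → G) → G) (hop : SuperAssoc n op) (H : Set G) (hne : H.Nonempty)
    (hnc : ∀ (g₁ g₂ : G) (t : G → G), IsTranslation n op t →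
      g₁ ∈ H → g₂ ∈ H → t g₁ ∈ H → t g₂ ∈ H) :
    (∃ a : G, H = {b | RH n op H a b}) ∧ H ≠ WH n op H := by
  obtain ⟨a, ha⟩ := hne
  constructor
  · refine ⟨a, Set.ext fun b => ?_⟩
    constructor
    · intro hb
      ext t
      simp only [rhoSet, Set.mem_setOf_eq]
      exact ⟨fun ⟨ht, hta⟩ => ⟨ht, hnc a b t ht ha hb hta⟩,
             fun ⟨ht, htb⟩ => ⟨ht, hnc b a t ht hb ha htb⟩⟩
    · intro hb
      have : (fun x : G => x) ∈ rhoSet n op H b := by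
        rw [← hb]; exact ⟨IsTranslation.id, ha⟩
      exact this.2
  · intro h
    have : a ∈ WH n op H := h ▸ ha
    have hmem : (fun x : G => x) ∈ rhoSet n op H a := ⟨IsTranslation.id, ha⟩
    rw [this] at hmem
    exact hmem
end

section
/- Let G be a Menger algebra of rank n. Every v-congruence ε on G satisfies ε = ⋂{R_H | H ∈ G/ε}, where G/ε is the set of all ε-classes. -/
theorem stmt3 {G : Type*} [Nonempty G] {n : ℕ} (hn : 1 ≤ n)
    (op : G → (Fin n → G) → G) (hop : SuperAssoc n op) (ε : G → G → Prop) (hε : Equivalence ε)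
    (hv : ∀ (z : G) (x y : Fin n → G), (∀ i, ε (x i) (y i)) → ε (op z x) (op z y)) :
    ∀ a b : G, ε a b ↔ ∀ H : Set G, (∃ c, H = {d | ε c d}) → RH n op H a b := by
  intro a b
  constructor
  · intro hab H hH
    obtain ⟨c, rfl⟩ := hH
    have key : ∀ t : G → G, IsTranslation n op t → ε (t a) (t b) := by
      intro t ht
      induction ht with
      | id => exact hab
      | step t ht a' i bv ih =>
        apply hv
        intro j
        by_cases hj : j = i
        · subst hj; simp [Function.update_self]; exact ih
        · simp [Function.update_of_ne hj]; exact hε.refl _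
    ext t
    simp only [rhoSet, Set.mem_setOf_eq]
    constructor
    · rintro ⟨ht, hta⟩
      exact ⟨ht, hε.trans hta (key t ht)⟩
    · rintro ⟨ht, htb⟩
      exact ⟨ht, hε.trans htb (hε.symm (key t ht))⟩
  · intro h
    have := h {d | ε a d} ⟨a, rfl⟩
    have hid : (fun x : G => x) ∈ rhoSet n op {d | ε a d} a :=
      ⟨IsTranslation.id, hε.refl a⟩
    rw [this] at hid
    exact hid.2
end

section
/- Let G be a Menger algebra of rank n and H a subset of G. The following conditions are equivalent: (a) H is strong; (b) for all x, y ∈ G and t₁, t₂ ∈ T_n(G), if t₁(x) ∈ H, t₁(y) ∈ H and t₂(y) ∈ H, then t₂(x) ∈ H; (c) for all t₁, t₂ ∈ T_n(G), if ρ°_H⟨t₁⟩ ∩ ρ°_H⟨t₂⟩ ≠ ∅, then ρ°_H⟨t₁⟩ = ρ°_H⟨t₂⟩. -/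
theorem stmt4 {G : Type*} [Nonempty G] {n : ℕ} (hn : 1 ≤ n)
    (op : G → (Fin n → G) → G) (hop : SuperAssoc n op) (H : Set G) :
    (Strong n op H ↔
      ∀ (x y : G) (t₁ t₂ : G → G), IsTranslation n op t₁ → IsTranslation n op t₂ →
        t₁ x ∈ H → t₁ y ∈ H → t₂ y ∈ H → t₂ x ∈ H) ∧
    (Strong n op H ↔
      ∀ t₁ t₂ : G → G, IsTranslation n op t₁ → IsTranslation n op t₂ →
        (rhoCirc n op H t₁ ∩ rhoCirc n op H t₂).Nonempty →
        rhoCirc n op H t₁ = rhoCirc n op H t₂) := by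
  have hb : Strong n op H ↔
      ∀ (x y : G) (t₁ t₂ : G → G), IsTranslation n op t₁ → IsTranslation n op t₂ →
        t₁ x ∈ H → t₁ y ∈ H → t₂ y ∈ H → t₂ x ∈ H := by
    constructor
    · intro hs x y t₁ t₂ h₁ h₂ hx hy hy2
      have := hs x y ⟨t₁, ⟨h₁, hx⟩, ⟨h₁, hy⟩⟩
      have : t₂ ∈ rhoSet n op H x := this ▸ (⟨h₂, hy2⟩ : t₂ ∈ rhoSet n op H y)
      exact this.2
    · intro hb a b ⟨t, ⟨⟨ht, hta⟩, ⟨_, htb⟩⟩⟩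
      ext t₂
      constructor
      · rintro ⟨h₂, h₂a⟩
        exact ⟨h₂, hb b a t t₂ ht h₂ htb hta h₂a⟩
      · rintro ⟨h₂, h₂b⟩
        exact ⟨h₂, hb a b t t₂ ht h₂ hta htb h₂b⟩
  refine ⟨hb, hb.trans ?_⟩
  constructor
  · intro hB t₁ t₂ h₁ h₂ ⟨x, hx1, hx2⟩
    ext y
    constructor
    · intro hy
      exact hB y x t₁ t₂ h₁ h₂ hy hx1 hx2
    · intro hy
      exact hB y x t₂ t₁ h₂ h₁ hy hx2 hx1
  · intro hC x y t₁ t₂ h₁ h₂ hx hy hy2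
    have := hC t₁ t₂ h₁ h₂ ⟨y, hy, hy2⟩
    exact (Set.ext_iff.mp this x).mp hx
end

section
/- Let G be a Menger algebra of rank n. Every nonempty strong subset H of G is an equivalence class of the relation R_H, and this class is different from W_H. -/
theorem stmt5 {G : Type*} [Nonempty G] {n : ℕ} (hn : 1 ≤ n)
    (op : G → (Fin n → G) → G) (hop : SuperAssoc n op) (H : Set G) (hne : H.Nonempty)
    (hs : Strong n op H) :
    (∃ a : G, H = {b | RH n op H a b}) ∧ H ≠ WH n op H := by
  obtain ⟨a, ha⟩ := hne
  have hid : ∀ c : G, c ∈ H → (fun x => x) ∈ rhoSet n op H c :=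
    fun c hc => ⟨IsTranslation.id, hc⟩
  constructor
  · refine ⟨a, Set.ext fun b => ⟨fun hb => ?_, fun hb => ?_⟩⟩
    · exact hs a b ⟨fun x => x, hid a ha, hid b hb⟩
    · have : (fun x => x) ∈ rhoSet n op H b := hb ▸ hid a ha
      exact this.2
  · intro h
    have : rhoSet n op H a = ∅ := (h ▸ ha : a ∈ WH n op H)
    exact absurd (this ▸ hid a ha) (Set.notMem_empty _)
end

section
/- Let G be a Menger algebra of rank n and H a strong subset of G. Then the equivalence classes of R_H are exactly the nonempty members of the family K = {ρ°_H⟨t⟩ | t ∈ T_n(G)} ∪ {W_H}. -/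
theorem stmt6 {G : Type*} [Nonempty G] {n : ℕ} (hn : 1 ≤ n)
    (op : G → (Fin n → G) → G) (hop : SuperAssoc n op) (H : Set G) (hs : Strong n op H) :
    ∀ X : Set G, (∃ a : G, X = {b | RH n op H a b}) ↔
      (X.Nonempty ∧ (X = WH n op H ∨
        ∃ t : G → G, IsTranslation n op t ∧ X = rhoCirc n op H t)) := by
  intro X
  constructor
  · rintro ⟨a, rfl⟩
    refine ⟨⟨a, rfl⟩, ?_⟩
    by_cases h : rhoSet n op H a = ∅
    · left
      ext b
      simp only [RH, WH, Set.mem_setOf_eq, h]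
      exact eq_comm
    · right
      obtain ⟨t, ht, hta⟩ := Set.nonempty_iff_ne_empty.2 h
      refine ⟨t, ht, ?_⟩
      ext b
      simp only [RH, rhoCirc, Set.mem_setOf_eq]
      constructor
      · intro hab
        have : t ∈ rhoSet n op H b := hab ▸ ⟨ht, hta⟩
        exact this.2
      · intro htb
        exact hs a b ⟨t, ⟨ht, hta⟩, ⟨ht, htb⟩⟩
  · rintro ⟨⟨a, ha⟩, rfl | ⟨t, ht, rfl⟩⟩
    · refine ⟨a, ?_⟩
      have ha' : rhoSet n op H a = ∅ := ha
      ext b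
      simp only [RH, WH, Set.mem_setOf_eq, ha']
      exact eq_comm
    · refine ⟨a, ?_⟩
      have ha' : t a ∈ H := ha
      ext b
      simp only [RH, rhoCirc, Set.mem_setOf_eq]
      constructor
      · intro htb
        exact (hs a b ⟨t, ⟨ht, ha'⟩, ⟨ht, htb⟩⟩)
      · intro hab
        have : t ∈ rhoSet n op H b := hab ▸ ⟨ht, ha'⟩
        exact this.2
end

section
/- Let G be a Menger algebra of rank n and H a strong subset of G. Then R_H is a v-cancellative v-congruence if and only if W_H is l-consistent in G. -/
theorem rel_apply_of_forall_update {ι α β : Type*} [Fintype ι] [DecidableEq ι]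
    {r : α → α → Prop} {s : β → β → Prop} (hs : Equivalence s) (f : (ι → α) → β)
    (hf : ∀ (w : ι → α) (i : ι) (a b : α), r a b →
      s (f (Function.update w i a)) (f (Function.update w i b)))
    {x y : ι → α} (hxy : ∀ i, r (x i) (y i)) : s (f x) (f y) := by
  suffices ∀ t : Finset ι, s (f x) (f (t.piecewise y x)) by
    simpa using this Finset.univ
  intro t
  induction t using Finset.induction_on with
  | empty => simpa using hs.refl (f x)
  | insert j t hj ih =>
    have hxj : Function.update (t.piecewise y x) j (x j) = t.piecewise y x := by
      simp [Finset.piecewise_eq_of_notMem _ _ _ hj]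
    rw [Finset.piecewise_insert]
    refine hs.trans ih ?_
    simpa only [hxj] using hf (t.piecewise y x) j (x j) (y j) (hxy j)

section

variable {G : Type*} {n : ℕ} {op : G → (Fin n → G) → G} {H : Set G}

theorem IsTranslation.comp {s t : G → G} (hs : IsTranslation n op s)
    (ht : IsTranslation n op t) : IsTranslation n op (fun x => s (t x)) := by
  induction hs with
  | id => exact ht
  | step _ _ a i b ih => exact .step _ ih a i b

theorem IsTranslation.op_update (a : G) (i : Fin n) (b : Fin n → G) :
    IsTranslation n op (fun x => op a (Function.update b i x)) :=
  .step _ .id a i b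

theorem IsTranslation.comp_mem_rhoSet {s t : G → G} {a : G} (ht : IsTranslation n op t)
    (hs : s ∈ rhoSet n op H (t a)) : (fun x => s (t x)) ∈ rhoSet n op H a :=
  ⟨hs.1.comp ht, hs.2⟩

theorem IsTranslation.apply_mem_WH {t : G → G} {a : G} (ht : IsTranslation n op t)
    (ha : a ∈ WH n op H) : t a ∈ WH n op H :=
  Set.eq_empty_of_forall_notMem fun _ hs => (ha ▸ ht.comp_mem_rhoSet hs : _ ∈ (∅ : Set _))

theorem RH_equivalence : Equivalence (RH n op H) :=
  ⟨fun _ => rfl, Eq.symm, Eq.trans⟩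

theorem RH_of_mem_WH {a b : G} (ha : a ∈ WH n op H) (hb : b ∈ WH n op H) :
    RH n op H a b :=
  ha.trans hb.symm

theorem RH.mem_WH {a b : G} (h : RH n op H a b) (hb : b ∈ WH n op H) : a ∈ WH n op H :=
  h.trans hb

theorem RH.map {t : G → G} {a b : G} (ht : IsTranslation n op t) (h : RH n op H a b) :
    RH n op H (t a) (t b) := by
  ext s
  constructor
  · intro hs
    exact ⟨hs.1, (h ▸ ht.comp_mem_rhoSet hs).2⟩
  · intro hs
    exact ⟨hs.1, (h.symm ▸ ht.comp_mem_rhoSet hs).2⟩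

theorem RH.of_map (hs : Strong n op H)
    (hcons : ∀ (g : G) (t : G → G), IsTranslation n op t → t g ∈ WH n op H → g ∈ WH n op H)
    {t : G → G} {a b : G} (ht : IsTranslation n op t) (h : RH n op H (t a) (t b)) :
    RH n op H a b := by
  rcases Set.eq_empty_or_nonempty (rhoSet n op H (t a)) with hW | ⟨s, hsa⟩
  · exact RH_of_mem_WH (hcons a t ht hW) (hcons b t ht (RH.mem_WH h.symm hW))
  · have hsb : s ∈ rhoSet n op H (t b) := h ▸ hsa
    exact hs a b ⟨_, ht.comp_mem_rhoSet hsa, ht.comp_mem_rhoSet hsb⟩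

theorem mem_WH_of_apply_mem_WH
    (hcancel : ∀ (x y u : G) (w : Fin n → G) (i : Fin n),
      RH n op H (op u (Function.update w i x)) (op u (Function.update w i y)) → RH n op H x y)
    {t : G → G} {g : G} (ht : IsTranslation n op t) (hg : t g ∈ WH n op H) :
    g ∈ WH n op H := by
  induction ht with
  | id => exact hg
  | step _ _ a i b ih =>
    apply ih
    have hv := (IsTranslation.op_update (op := op) a i b).apply_mem_WH hg
    exact (hcancel _ _ a b i (RH_of_mem_WH hg hv)).mem_WH hg

end

theorem stmt10_general {G : Type*} {n : ℕ}
    (op : G → (Fin n → G) → G) (H : Set G) (hs : Strong n op H) :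
    (Equivalence (RH n op H) ∧
     (∀ (z : G) (x y : Fin n → G), (∀ i, RH n op H (x i) (y i)) →
        RH n op H (op z x) (op z y)) ∧
     (∀ (x y u : G) (w : Fin n → G) (i : Fin n),
        RH n op H (op u (Function.update w i x)) (op u (Function.update w i y)) →
        RH n op H x y)) ↔
    (∀ (g : G) (t : G → G), IsTranslation n op t → t g ∈ WH n op H → g ∈ WH n op H) := by
  constructor
  · rintro ⟨-, -, hcancel⟩ g t ht
    exact mem_WH_of_apply_mem_WH hcancel ht
  · intro hcons
    refine ⟨RH_equivalence, fun z x y hxy => ?_, fun x y u w i =>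
      RH.of_map hs hcons (IsTranslation.op_update u i w)⟩
    exact rel_apply_of_forall_update RH_equivalence (op z)
      (fun w i _ _ h => h.map (IsTranslation.op_update z i w)) hxy

theorem stmt10 {G : Type*} [Nonempty G] {n : ℕ} (hn : 1 ≤ n)
    (op : G → (Fin n → G) → G) (hop : SuperAssoc n op) (H : Set G) (hs : Strong n op H) :
    (Equivalence (RH n op H) ∧
     (∀ (z : G) (x y : Fin n → G), (∀ i, RH n op H (x i) (y i)) →
        RH n op H (op z x) (op z y)) ∧
     (∀ (x y u : G) (w : Fin n → G) (i : Fin n),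
        RH n op H (op u (Function.update w i x)) (op u (Function.update w i y)) →
        RH n op H x y)) ↔
    (∀ (g : G) (t : G → G), IsTranslation n op t → t g ∈ WH n op H → g ∈ WH n op H) :=
  stmt10_general op H hs
end

section
/- Let G be a Menger algebra of rank n. Every l-congruence ε on G satisfies ε = ⋂{L_H | H ∈ G/ε}, where G/ε is the set of all ε-classes. -/
/-- The action of `B = Gⁿ ∪ {ē}` on `G`; `none` plays the role of `ē`. -/
def act {G : Type*} (n : ℕ) (op : G → (Fin n → G) → G) : G → Option (Fin n → G) → G
  | g, none => g
  | g, some x => op g x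

/-- `η_H⟨g⟩ = {x̄ ∈ B | g[x̄] ∈ H}`. -/
def etaSet {G : Type*} (n : ℕ) (op : G → (Fin n → G) → G) (H : Set G) (g : G) :
    Set (Option (Fin n → G)) :=
  {x | act n op g x ∈ H}

/-- `η°_H⟨x̄⟩ = {g ∈ G | g[x̄] ∈ H}`. -/
def etaCirc {G : Type*} (n : ℕ) (op : G → (Fin n → G) → G) (H : Set G)
    (x : Option (Fin n → G)) : Set G :=
  {g | act n op g x ∈ H}

/-- `_H W = {g ∈ G | η_H⟨g⟩ = ∅}`. -/
def WL {G : Type*} (n : ℕ) (op : G → (Fin n → G) → G) (H : Set G) : Set G :=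
  {g | etaSet n op H g = ∅}

/-- `L_H = {(g₁,g₂) | η_H⟨g₁⟩ = η_H⟨g₂⟩}`. -/
def LH {G : Type*} (n : ℕ) (op : G → (Fin n → G) → G) (H : Set G) : G → G → Prop :=
  fun a b => etaSet n op H a = etaSet n op H b

/-- A subset `H` is l-strong. -/
def LStrong {G : Type*} (n : ℕ) (op : G → (Fin n → G) → G) (H : Set G) : Prop :=
  ∀ a b : G, (etaSet n op H a ∩ etaSet n op H b).Nonempty →
    etaSet n op H a = etaSet n op H b

theorem stmt12 {G : Type*} [Nonempty G] {n : ℕ} (hn : 1 ≤ n)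
    (op : G → (Fin n → G) → G) (hop : SuperAssoc n op) (ε : G → G → Prop) (hε : Equivalence ε)
    (hl : ∀ (a b : G) (z : Fin n → G), ε a b → ε (op a z) (op b z)) :
    ∀ a b : G, ε a b ↔ ∀ H : Set G, (∃ c, H = {d | ε c d}) → LH n op H a b := by
  intro a b
  constructor
  · rintro hab H ⟨c, rfl⟩
    ext x
    cases x with
    | none =>
      simp only [etaSet, act, Set.mem_setOf_eq]
      exact ⟨fun h => hε.trans h hab, fun h => hε.trans h (hε.symm hab)⟩
    | some z =>
      simp only [etaSet, act, Set.mem_setOf_eq]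
      exact ⟨fun h => hε.trans h (hl a b z hab),
             fun h => hε.trans h (hε.symm (hl a b z hab))⟩
  · intro h
    have := h {d | ε a d} ⟨a, rfl⟩
    have hnone : (none : Option (Fin n → G)) ∈ etaSet n op {d | ε a d} a := hε.refl a
    rw [this] at hnone
    exact hnone
end

section
/- Let G be a Menger algebra of rank n and H a subset of G. The following conditions are equivalent: (i) H is l-strong; (ii) for all g₁, g₂ ∈ G and x̄, ȳ ∈ B, if g₁[x̄] ∈ H, g₂[x̄] ∈ H and g₂[ȳ] ∈ H, then g₁[ȳ] ∈ H; (iii) for all x̄, ȳ ∈ B, if η°_H⟨x̄⟩ ∩ η°_H⟨ȳ⟩ ≠ ∅, then η°_H⟨x̄⟩ = η°_H⟨ȳ⟩. -/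
theorem stmt13 {G : Type*} [Nonempty G] {n : ℕ} (hn : 1 ≤ n)
    (op : G → (Fin n → G) → G) (hop : SuperAssoc n op) (H : Set G) :
    (LStrong n op H ↔
      ∀ (g₁ g₂ : G) (x y : Option (Fin n → G)),
        act n op g₁ x ∈ H → act n op g₂ x ∈ H → act n op g₂ y ∈ H →
        act n op g₁ y ∈ H) ∧
    (LStrong n op H ↔
      ∀ x y : Option (Fin n → G), (etaCirc n op H x ∩ etaCirc n op H y).Nonempty →
        etaCirc n op H x = etaCirc n op H y) := by
  constructor
  · constructor
    · intro hL g₁ g₂ x y h1 h2 h3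
      have hx : x ∈ etaSet n op H g₁ ∩ etaSet n op H g₂ := ⟨h1, h2⟩
      have := hL g₁ g₂ ⟨x, hx⟩
      exact (this ▸ h3 : y ∈ etaSet n op H g₁)
    · intro h a b ⟨z, hz1, hz2⟩
      ext w
      constructor
      · intro hw; exact h b a z w hz2 hz1 hw
      · intro hw; exact h a b z w hz1 hz2 hw
  · constructor
    · intro hL x y ⟨g, hg1, hg2⟩
      ext w
      constructor
      · intro hw
        have hx : x ∈ etaSet n op H g ∩ etaSet n op H w := ⟨hg1, hw⟩
        have := hL g w ⟨x, hx⟩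
        exact (this ▸ hg2 : y ∈ etaSet n op H w)
      · intro hw
        have hy : y ∈ etaSet n op H g ∩ etaSet n op H w := ⟨hg2, hw⟩
        have := hL g w ⟨y, hy⟩
        exact (this ▸ hg1 : x ∈ etaSet n op H w)
    · intro h a b ⟨z, hz1, hz2⟩
      ext w
      constructor
      · intro hw
        have hz : a ∈ etaCirc n op H z ∩ etaCirc n op H w := ⟨hz1, hw⟩
        have := h z w ⟨a, hz⟩
        exact (this ▸ hz2 : b ∈ etaCirc n op H w)
      · intro hw
        have hz : b ∈ etaCirc n op H z ∩ etaCirc n op H w := ⟨hz2, hw⟩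
        have := h z w ⟨b, hz⟩
        exact (this ▸ hz1 : a ∈ etaCirc n op H w)
end

section
/- Let G be a Menger algebra of rank n. Every nonempty normal l-complex H of G is an equivalence class of the relation L_H, and this class is different from the l-residue _H W. -/
theorem stmt14 {G : Type*} [Nonempty G] {n : ℕ} (hn : 1 ≤ n)
    (op : G → (Fin n → G) → G) (hop : SuperAssoc n op) (H : Set G) (hne : H.Nonempty)
    (hnc : ∀ (g₁ g₂ : G) (x : Option (Fin n → G)), g₁ ∈ H → g₂ ∈ H →
      act n op g₁ x ∈ H → act n op g₂ x ∈ H) :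
    (∃ a : G, H = {b | LH n op H a b}) ∧ H ≠ WL n op H := by
  obtain ⟨a, ha⟩ := hne
  have hmem : ∀ b ∈ H, etaSet n op H a = etaSet n op H b := by
    intro b hb
    ext x
    constructor
    · intro hx; exact hnc a b x ha hb hx
    · intro hx; exact hnc b a x hb ha hx
  constructor
  · refine ⟨a, ?_⟩
    ext b
    constructor
    · intro hb; exact hmem b hb
    · intro hb
      have hnone : (none : Option (Fin n → G)) ∈ etaSet n op H b := by
        rw [← hb]; exact ha
      exact hnone
  · intro hEq
    have : etaSet n op H a = ∅ := by
      have : a ∈ WL n op H := hEq ▸ ha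
      exact this
    have : (none : Option (Fin n → G)) ∈ (∅ : Set (Option (Fin n → G))) := this ▸ ha
    exact this
end

section
/- Let G be a Menger algebra of rank n and H an l-strong subset of G. Then the equivalence classes of L_H are exactly the nonempty members of the family E = {η°_H⟨x̄⟩ | x̄ ∈ B} ∪ {_H W}. -/
theorem stmt15 {G : Type*} [Nonempty G] {n : ℕ} (hn : 1 ≤ n)
    (op : G → (Fin n → G) → G) (hop : SuperAssoc n op) (H : Set G) (hs : LStrong n op H) :
    ∀ X : Set G, (∃ a : G, X = {b | LH n op H a b}) ↔
      (X.Nonempty ∧ (X = WL n op H ∨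
        ∃ x : Option (Fin n → G), X = etaCirc n op H x)) := by

  intro X
  constructor
  · rintro ⟨a, rfl⟩
    refine ⟨⟨a, rfl⟩, ?_⟩
    by_cases ha : etaSet n op H a = ∅
    · left
      ext b
      simp only [Set.mem_setOf_eq, LH, WL, ha]
      constructor
      · intro h; exact h.symm
      · intro h; exact h.symm
    · right
      obtain ⟨x, hx⟩ := Set.nonempty_iff_ne_empty.mpr ha
      refine ⟨x, ?_⟩
      ext b
      simp only [Set.mem_setOf_eq, LH, etaCirc]
      constructor
      · intro h
        have : x ∈ etaSet n op H b := h ▸ hx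
        exact this
      · intro h
        exact hs a b ⟨x, hx, h⟩
  · rintro ⟨⟨a, haX⟩, hcase | ⟨x, hcase⟩⟩
    · refine ⟨a, ?_⟩
      have ha : etaSet n op H a = ∅ := by rw [hcase] at haX; exact haX
      rw [hcase]
      ext b
      simp only [Set.mem_setOf_eq, LH, WL, ha]
      constructor
      · intro h; exact h.symm
      · intro h; exact h.symm
    · refine ⟨a, ?_⟩
      have hax : x ∈ etaSet n op H a := by rw [hcase] at haX; exact haX
      rw [hcase]
      ext b
      simp only [Set.mem_setOf_eq, LH, etaCirc]
      constructor
      · intro h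
        exact hs a b ⟨x, hax, h⟩
      · intro h
        have : x ∈ etaSet n op H b := h ▸ hax
        exact this
end

section
/- Let G be a Menger algebra of rank n, H a nonempty l-strong subset of G, and X an equivalence class of L_H with X ≠ _H W. Then X is l-strong, _H W ⊆ _X W, L_H ⊆ L_X, and the restrictions of L_H and L_X to G \ _X W coincide: L_H ∩ (G \ _X W) × (G \ _X W) = L_X ∩ (G \ _X W) × (G \ _X W). -/
def omul {G : Type*} {n : ℕ} (op : G → (Fin n → G) → G) :
    Option (Fin n → G) → Option (Fin n → G) → Option (Fin n → G)
  | none, y => y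
  | some x, none => some x
  | some x, some y => some (fun i => op (x i) y)

lemma act_omul {G : Type*} {n : ℕ} {op : G → (Fin n → G) → G} (hop : SuperAssoc n op)
    (g : G) (x y : Option (Fin n → G)) :
    act n op g (omul op x y) = act n op (act n op g x) y := by
  cases x <;> cases y <;> simp only [act, omul]
  exact (hop g _ _).symm

lemma eta_act {G : Type*} {n : ℕ} {op : G → (Fin n → G) → G} (hop : SuperAssoc n op)
    (H : Set G) (g : G) (x : Option (Fin n → G)) :
    etaSet n op H (act n op g x) = {y | omul op x y ∈ etaSet n op H g} := by
  ext y
  simp only [etaSet, Set.mem_setOf_eq, ← act_omul hop]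

theorem stmt16 {G : Type*} [Nonempty G] {n : ℕ} (hn : 1 ≤ n)
    (op : G → (Fin n → G) → G) (hop : SuperAssoc n op) (H : Set G) (hne : H.Nonempty)
    (hs : LStrong n op H)
    (X : Set G) (hX : ∃ a : G, X = {b | LH n op H a b}) (hXW : X ≠ WL n op H) :
    LStrong n op X ∧ WL n op H ⊆ WL n op X ∧
    (∀ a b : G, LH n op H a b → LH n op X a b) ∧
    (∀ a b : G, a ∉ WL n op X → b ∉ WL n op X → (LH n op H a b ↔ LH n op X a b)) := by
  obtain ⟨a₀, rfl⟩ := hX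
  set Xs : Set G := {b | LH n op H a₀ b} with hXs
  have ha₀ : (etaSet n op H a₀).Nonempty := by
    rw [Set.nonempty_iff_ne_empty]
    intro h
    apply hXW
    ext b
    simp only [hXs, Set.mem_setOf_eq, LH, WL, h]
    exact ⟨fun hb => hb.symm, fun hb => hb.symm⟩
  obtain ⟨z, hz⟩ := ha₀
  have key : ∀ g x, act n op g x ∈ Xs → omul op x z ∈ etaSet n op H g := by
    intro g x hgx
    have hz' : z ∈ etaSet n op H (act n op g x) := by
      have : etaSet n op H a₀ = etaSet n op H (act n op g x) := hgx
      rw [← this]; exact hz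
    rw [eta_act hop] at hz'
    exact hz'
  have transfer : ∀ a b : G, LH n op H a b → etaSet n op Xs a = etaSet n op Xs b := by
    intro a b hab
    ext x
    have h2 : etaSet n op H (act n op a x) = etaSet n op H (act n op b x) := by
      rw [eta_act hop, eta_act hop, hab]
    show act n op a x ∈ Xs ↔ act n op b x ∈ Xs
    simp only [hXs, Set.mem_setOf_eq, LH, h2]
  have strong' : ∀ a b : G, (etaSet n op Xs a ∩ etaSet n op Xs b).Nonempty →
      LH n op H a b := by
    rintro a b ⟨x, hxa, hxb⟩
    exact hs a b ⟨omul op x z, key a x hxa, key b x hxb⟩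
  refine ⟨fun a b h => transfer a b (strong' a b h), ?_, fun a b h => transfer a b h, ?_⟩
  · intro g hg
    simp only [WL, Set.mem_setOf_eq] at hg ⊢
    ext x
    simp only [Set.mem_empty_iff_false, iff_false]
    intro hx
    have := key g x hx
    rw [hg] at this
    exact this
  · intro a b ha hb
    refine ⟨fun h => transfer a b h, fun h => ?_⟩
    simp only [WL, Set.mem_setOf_eq] at ha
    have hna : (etaSet n op Xs a).Nonempty := Set.nonempty_iff_ne_empty.2 ha
    obtain ⟨x, hx⟩ := hna
    have hx' : x ∈ etaSet n op Xs b := by rw [← h]; exact hx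
    exact strong' a b ⟨x, hx, hx'⟩
end

section
/- Let G be a Menger algebra of rank n and ε an l-cancellative l-congruence on G. Then every ε-class X is an l-strong subset of G, ε ⊆ L_X, and the relations ε and L_X coincide on G \ _X W: ε ∩ (G \ _X W) × (G \ _X W) = L_X ∩ (G \ _X W) × (G \ _X W). -/
theorem stmt17 {G : Type*} [Nonempty G] {n : ℕ} (hn : 1 ≤ n)
    (op : G → (Fin n → G) → G) (hop : SuperAssoc n op) (ε : G → G → Prop) (hε : Equivalence ε)
    (hl : ∀ (a b : G) (z : Fin n → G), ε a b → ε (op a z) (op b z))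
    (hc : ∀ (a b : G) (z : Fin n → G), ε (op a z) (op b z) → ε a b)
    (X : Set G) (hX : ∃ a : G, X = {b | ε a b}) :
    LStrong n op X ∧ (∀ a b : G, ε a b → LH n op X a b) ∧
    (∀ a b : G, a ∉ WL n op X → b ∉ WL n op X → (ε a b ↔ LH n op X a b)) := by
  obtain ⟨a0, rfl⟩ := hX
  -- two elements of the class are ε-related
  have hmem : ∀ g h : G, ε a0 g → ε a0 h → ε g h := fun g h hg hh =>
    hε.trans (hε.symm hg) hh
  -- ε g h implies etaSet equal
  have keta : ∀ g h : G, ε g h → etaSet n op {b | ε a0 b} g = etaSet n op {b | ε a0 b} h := by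
    intro g h hgh
    ext x
    cases x with
    | none =>
      simp only [etaSet, act, Set.mem_setOf_eq]
      exact ⟨fun hg => hε.trans hg hgh, fun hh => hε.trans hh (hε.symm hgh)⟩
    | some z =>
      simp only [etaSet, act, Set.mem_setOf_eq]
      have := hl g h z hgh
      exact ⟨fun hg => hε.trans hg this, fun hh => hε.trans hh (hε.symm this)⟩
  -- common element of etaSets implies ε g h
  have kcom : ∀ (g h : G) (x : Option (Fin n → G)),
      x ∈ etaSet n op {b | ε a0 b} g → x ∈ etaSet n op {b | ε a0 b} h → ε g h := by
    intro g h x hg hh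
    cases x with
    | none => exact hmem g h hg hh
    | some z => exact hc g h z (hmem _ _ hg hh)
  refine ⟨?_, fun a b hab => keta a b hab, ?_⟩
  · intro a b ⟨x, hxa, hxb⟩
    exact keta a b (kcom a b x hxa hxb)
  · intro a b ha hb
    refine ⟨fun hab => keta a b hab, fun hab => ?_⟩
    have hne : (etaSet n op {b | ε a0 b} a).Nonempty := Set.nonempty_iff_ne_empty.2 ha
    obtain ⟨x, hx⟩ := hne
    exact kcom a b x hx (hab ▸ hx)
end

section
/- Let G be a Menger algebra of rank n and H a subset of G. The following conditions are equivalent: (i) H is bistrong; (ii) for all g₁, g₂ ∈ G, x̄, ȳ ∈ B and t₁, t₂ ∈ T_n(G), if t₁(g₁[x̄]) ∈ H, t₁(g₂[x̄]) ∈ H and t₂(g₂[ȳ]) ∈ H, then t₂(g₁[ȳ]) ∈ H; (iii) for all x̄, ȳ ∈ B and t₁, t₂ ∈ T_n(G), if σ°_H⟨x̄, t₁⟩ ∩ σ°_H⟨ȳ, t₂⟩ ≠ ∅, then σ°_H⟨x̄, t₁⟩ = σ°_H⟨ȳ, t₂⟩. -/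
/-- `σ_H⟨g⟩ = {(x̄,t) ∈ B × T_n(G) | t(g[x̄]) ∈ H}`. -/
def sigmaSet {G : Type*} (n : ℕ) (op : G → (Fin n → G) → G) (H : Set G) (g : G) :
    Set (Option (Fin n → G) × (G → G)) :=
  {p | IsTranslation n op p.2 ∧ p.2 (act n op g p.1) ∈ H}

/-- `σ°_H⟨x̄,t⟩ = {g ∈ G | t(g[x̄]) ∈ H}`. -/
def sigmaCirc {G : Type*} (n : ℕ) (op : G → (Fin n → G) → G) (H : Set G)
    (x : Option (Fin n → G)) (t : G → G) : Set G :=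
  {g | t (act n op g x) ∈ H}

/-- `W^H = {g ∈ G | σ_H⟨g⟩ = ∅}`. -/
def WP {G : Type*} (n : ℕ) (op : G → (Fin n → G) → G) (H : Set G) : Set G :=
  {g | sigmaSet n op H g = ∅}

/-- `P_H = {(g₁,g₂) | σ_H⟨g₁⟩ = σ_H⟨g₂⟩}`. -/
def PH {G : Type*} (n : ℕ) (op : G → (Fin n → G) → G) (H : Set G) : G → G → Prop :=
  fun a b => sigmaSet n op H a = sigmaSet n op H b

/-- A subset `H` is bistrong. -/
def Bistrong {G : Type*} (n : ℕ) (op : G → (Fin n → G) → G) (H : Set G) : Prop :=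
  ∀ a b : G, (sigmaSet n op H a ∩ sigmaSet n op H b).Nonempty →
    sigmaSet n op H a = sigmaSet n op H b

theorem stmt19 {G : Type*} [Nonempty G] {n : ℕ} (hn : 1 ≤ n)
    (op : G → (Fin n → G) → G) (hop : SuperAssoc n op) (H : Set G) :
    (Bistrong n op H ↔
      ∀ (g₁ g₂ : G) (x y : Option (Fin n → G)) (t₁ t₂ : G → G),
        IsTranslation n op t₁ → IsTranslation n op t₂ →
        t₁ (act n op g₁ x) ∈ H → t₁ (act n op g₂ x) ∈ H → t₂ (act n op g₂ y) ∈ H →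
        t₂ (act n op g₁ y) ∈ H) ∧
    (Bistrong n op H ↔
      ∀ (x y : Option (Fin n → G)) (t₁ t₂ : G → G),
        IsTranslation n op t₁ → IsTranslation n op t₂ →
        (sigmaCirc n op H x t₁ ∩ sigmaCirc n op H y t₂).Nonempty →
        sigmaCirc n op H x t₁ = sigmaCirc n op H y t₂) := by
  have hii : Bistrong n op H ↔
      ∀ (g₁ g₂ : G) (x y : Option (Fin n → G)) (t₁ t₂ : G → G),
        IsTranslation n op t₁ → IsTranslation n op t₂ →
        t₁ (act n op g₁ x) ∈ H → t₁ (act n op g₂ x) ∈ H → t₂ (act n op g₂ y) ∈ H →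
        t₂ (act n op g₁ y) ∈ H := by
    constructor
    · intro hb g₁ g₂ x y t₁ t₂ ht₁ ht₂ h1 h2 h3
      have := hb g₁ g₂ ⟨(x, t₁), ⟨ht₁, h1⟩, ⟨ht₁, h2⟩⟩
      have : ((y, t₂) : Option (Fin n → G) × (G → G)) ∈ sigmaSet n op H g₁ := by
        rw [this]; exact ⟨ht₂, h3⟩
      exact this.2
    · intro h a b ⟨⟨x, t⟩, ⟨ht, ha⟩, ⟨_, hbm⟩⟩
      ext ⟨y, s⟩
      constructor
      · rintro ⟨hs, hsa⟩
        exact ⟨hs, h b a x y t s ht hs hbm ha hsa⟩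
      · rintro ⟨hs, hsb⟩
        exact ⟨hs, h a b x y t s ht hs ha hbm hsb⟩
  refine ⟨hii, hii.trans ?_⟩
  constructor
  · intro h x y t₁ t₂ ht₁ ht₂ ⟨g, hg1, hg2⟩
    ext g'
    constructor
    · intro hg'
      exact h g' g x y t₁ t₂ ht₁ ht₂ hg' hg1 hg2
    · intro hg'
      exact h g' g y x t₂ t₁ ht₂ ht₁ hg' hg2 hg1
  · intro h g₁ g₂ x y t₁ t₂ ht₁ ht₂ h1 h2 h3
    have := h x y t₁ t₂ ht₁ ht₂ ⟨g₂, h2, h3⟩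
    have : g₁ ∈ sigmaCirc n op H y t₂ := this ▸ h1
    exact this
end
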